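/- arXiv:1712.01704 — 4 statements merged into one kernel-verified Lean document; each statement's English description precedes it below -/
import Mathlib

section
/- Fix n ≥ 1. For a permutation π of Fin n, let U_π be the complex matrix indexed by functions f, g : Fin n → Fin 2 with (U_π)_{f,g} = 1 if g = f ∘ π and 0 otherwise (the qubit permutation operator). Let E = {e₁,…,e_c} be subsets of Fin n, each of size at least 2, and for each m let π_m be a cyclic permutation whose support is exactly e_m. Let σ : ℕ → {1,…,c} be a periodic schedule attaining every value in each period, and let ρ(0) be a density matrix (positive semidefinite, trace one) indexed by Fin n → Fin 2, evolving by ρ(t+1) = (1/|e_{σ(t)}|) Σ_{τ=1}^{|e_{σ(t)}|} U_{π_{σ(t)}^τ}† ρ(t) U_{π_{σ(t)}^τ}. Then ρ(t) converges and lim_{t→∞} ρ(t) = (1/|S_E|) Σ_{π ∈ S_E} U_π† ρ(0) U_π, where S_E is the subgroup of the permutation group of Fin n generated by {π₁, …, π_c}. -/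
/-!
Expanding the recursion, `ρ(t) = ∑_{g ∈ S_E} p_t(g) U_g† ρ(0) U_g`, where `p_t` is the law at time
`t` of a random walk on the finite group `S_E` whose step at time `t` is `π_{σ(t)}^τ` with `τ`
uniform in `{1, …, |e_{σ(t)}|}`; thus `p_{t+1} = p_t * μ_t` (convolution). Every step charges the
identity (`π_m^{|e_m|} = 1`) and every period charges each generator `π_m`, so after some number
`M` of whole periods the walk charges every element of `S_E` with mass at least `ε > 0`. By
Doeblin's argument each such block of `M` steps shrinks the `ℓ¹` distance from `p_t` to the uniform
law by the factor `1 - ε |S_E|`, and no step increases it; hence `p_t` tends to the uniform law and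
`ρ(t)` to the average of `U_g† ρ(0) U_g` over `S_E`.
-/

open Matrix Finset Filter
open scoped Classical ComplexOrder

/-- The qubit permutation operator `U_π` on the `2ⁿ`-dimensional `n`-qubit space:
`(U_π)_{f,g} = 1` if `g = f ∘ π` and `0` otherwise. -/
noncomputable def permU (n : ℕ) (π : Equiv.Perm (Fin n)) :
    Matrix (Fin n → Fin 2) (Fin n → Fin 2) ℂ :=
  Matrix.of fun f g => if g = f ∘ π then 1 else 0

lemma tendsto_zero_of_antitone_of_le_mul {d : ℕ → ℝ} (hd : ∀ t, 0 ≤ d t) (hanti : Antitone d)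
    {M : ℕ} (hM : 0 < M) {r : ℝ} (hr0 : 0 ≤ r) (hr1 : r < 1)
    (hstep : ∀ j, d ((j + 1) * M) ≤ r * d (j * M)) :
    Tendsto d atTop (nhds 0) := by
  have hgeom : ∀ j, d (j * M) ≤ r ^ j * d 0 := by
    intro j
    induction j with
    | zero => simp
    | succ j ih =>
      calc d ((j + 1) * M) ≤ r * d (j * M) := hstep j
        _ ≤ r * (r ^ j * d 0) := mul_le_mul_of_nonneg_left ih hr0
        _ = r ^ (j + 1) * d 0 := by ring
  have hdiv : Tendsto (fun t : ℕ => t / M) atTop atTop :=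
    tendsto_atTop_atTop.2 fun b => ⟨b * M, fun t ht => (Nat.le_div_iff_mul_le hM).2 ht⟩
  have hbound : Tendsto (fun t : ℕ => r ^ (t / M) * d 0) atTop (nhds 0) := by
    simpa using ((tendsto_pow_atTop_nhds_zero_of_lt_one hr0 hr1).comp hdiv).mul_const (d 0)
  exact squeeze_zero hd (fun t => (hanti (Nat.div_mul_le_self t M)).trans (hgeom _)) hbound

namespace GroupWalk

open scoped Pointwise

section Pushforward

variable {α Γ : Type*} (s : Finset α) (f : α → Γ)

noncomputable def pushUniform : Γ → ℝ := fun x => (#{a ∈ s | f a = x} : ℝ) / #s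

lemma pushUniform_nonneg (x : Γ) : 0 ≤ pushUniform s f x := by
  unfold pushUniform; positivity

lemma pushUniform_apply_pos {a : α} (ha : a ∈ s) : 0 < pushUniform s f (f a) :=
  div_pos (Nat.cast_pos.2 (Finset.card_pos.2 ⟨a, Finset.mem_filter.2 ⟨ha, rfl⟩⟩))
    (Nat.cast_pos.2 (Finset.card_pos.2 ⟨a, ha⟩))

variable [Fintype Γ]

lemma sum_pushUniform_smul {V : Type*} [AddCommGroup V] [Module ℝ V] (B : Γ → V) :
    ∑ x, pushUniform s f x • B x = (#s : ℝ)⁻¹ • ∑ a ∈ s, B (f a) := by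
  rw [← Finset.sum_fiberwise s f, Finset.smul_sum]
  refine Finset.sum_congr rfl fun x _ => ?_
  rw [Finset.sum_congr rfl fun a ha => by rw [(Finset.mem_filter.1 ha).2], Finset.sum_const,
    ← Nat.cast_smul_eq_nsmul ℝ, smul_smul, pushUniform, div_eq_inv_mul]

lemma sum_pushUniform (hs : s.Nonempty) : ∑ x, pushUniform s f x = 1 := by
  simpa [hs.card_pos.ne'] using sum_pushUniform_smul s f (fun _ => (1 : ℝ))

end Pushforward

variable {Γ : Type*} [Fintype Γ]

noncomputable def distUnif (v : Γ → ℝ) : ℝ := ∑ x, |v x - (Fintype.card Γ : ℝ)⁻¹|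

lemma distUnif_nonneg (v : Γ → ℝ) : 0 ≤ distUnif v :=
  Finset.sum_nonneg fun _ _ => abs_nonneg _

lemma abs_sub_le_distUnif (v : Γ → ℝ) (x : Γ) :
    |v x - (Fintype.card Γ : ℝ)⁻¹| ≤ distUnif v :=
  Finset.single_le_sum (f := fun y => |v y - (Fintype.card Γ : ℝ)⁻¹|)
    (fun _ _ => abs_nonneg _) (Finset.mem_univ x)

lemma mul_card_le_one {w : Γ → ℝ} (hw : ∑ x, w x = 1) {ε : ℝ} (hε : ∀ x, ε ≤ w x) :
    ε * Fintype.card Γ ≤ 1 := by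
  have := Finset.sum_le_sum fun x (_ : x ∈ Finset.univ) => hε x
  rwa [Finset.sum_const, Finset.card_univ, nsmul_eq_mul, hw, mul_comm] at this

variable [Group Γ]

noncomputable def conv (f g : Γ → ℝ) : Γ → ℝ := fun x => ∑ a, f a * g (a⁻¹ * x)

lemma conv_single_one (f : Γ → ℝ) : conv f (Pi.single 1 1) = f := by
  funext x
  simp [conv, Pi.single_apply, inv_mul_eq_one]

lemma conv_assoc (f g h : Γ → ℝ) : conv (conv f g) h = conv f (conv g h) := by
  funext x
  simp only [conv, Finset.sum_mul, Finset.mul_sum]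
  rw [Finset.sum_comm]
  refine Finset.sum_congr rfl fun a _ => ?_
  exact (Fintype.sum_equiv (Equiv.mulLeft a) _ _ fun b => by
    simp only [Equiv.coe_mulLeft, inv_mul_cancel_left, _root_.mul_inv_rev, mul_assoc]).symm

lemma sum_conv (f g : Γ → ℝ) : ∑ x, conv f g x = (∑ x, f x) * ∑ x, g x := by
  simp only [conv]
  rw [Finset.sum_comm, Finset.sum_mul]
  refine Finset.sum_congr rfl fun a _ => ?_
  rw [← Finset.mul_sum]
  exact congrArg _ (Equiv.sum_comp (Equiv.mulLeft a⁻¹) g)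

lemma conv_nonneg {f g : Γ → ℝ} (hf : ∀ x, 0 ≤ f x) (hg : ∀ x, 0 ≤ g x) (x : Γ) :
    0 ≤ conv f g x :=
  Finset.sum_nonneg fun a _ => mul_nonneg (hf a) (hg _)

lemma conv_mul_pos {f g : Γ → ℝ} (hf : ∀ x, 0 ≤ f x) (hg : ∀ x, 0 ≤ g x)
    {a b : Γ} (ha : 0 < f a) (hb : 0 < g b) : 0 < conv f g (a * b) :=
  Finset.sum_pos' (fun i _ => mul_nonneg (hf i) (hg _))
    ⟨a, Finset.mem_univ a, by simpa only [inv_mul_cancel_left] using mul_pos ha hb⟩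

lemma distUnif_conv_le {ν w : Γ → ℝ} (hν : ∑ x, ν x = 1) (hw : ∑ x, w x = 1)
    {ε : ℝ} (hε : ∀ x, ε ≤ w x) :
    distUnif (conv ν w) ≤ (1 - ε * Fintype.card Γ) * distUnif ν := by
  set κ : ℝ := (Fintype.card Γ : ℝ)⁻¹
  have hκ : (Fintype.card Γ : ℝ) * κ = 1 := mul_inv_cancel₀ (by positivity)
  have hshift : ∀ a : Γ, ∑ x, (w (a⁻¹ * x) - ε) = 1 - ε * Fintype.card Γ := fun a => by
    rw [Finset.sum_sub_distrib, ← hw, Finset.sum_const, Finset.card_univ, nsmul_eq_mul, mul_comm]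
    exact congrArg (· - _) (Equiv.sum_comp (Equiv.mulLeft a⁻¹) w)
  -- The cross terms cancel because `ν` and `a ↦ w (a⁻¹ * x)` both have total mass one.
  have hcentred : ∀ x, conv ν w x - κ = ∑ a, (ν a - κ) * (w (a⁻¹ * x) - ε) := fun x => by
    have hw' : ∑ a, w (a⁻¹ * x) = 1 := by
      rw [← hw]; exact Equiv.sum_comp ((Equiv.inv Γ).trans (Equiv.mulRight x)) w
    simp only [sub_mul, mul_sub, Finset.sum_sub_distrib, ← Finset.mul_sum, ← Finset.sum_mul,
      hν, hw', Finset.sum_const, Finset.card_univ, nsmul_eq_mul, conv]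
    linear_combination -ε * hκ
  calc distUnif (conv ν w) = ∑ x, |∑ a, (ν a - κ) * (w (a⁻¹ * x) - ε)| := by
        rw [distUnif]; exact Finset.sum_congr rfl fun x _ => by rw [← hcentred]
    _ ≤ ∑ x, ∑ a, |ν a - κ| * (w (a⁻¹ * x) - ε) := by
        gcongr with x
        refine (Finset.abs_sum_le_sum_abs _ _).trans_eq (Finset.sum_congr rfl fun a _ => ?_)
        rw [abs_mul, abs_of_nonneg (sub_nonneg.2 (hε _))]
    _ = (1 - ε * Fintype.card Γ) * distUnif ν := by
        rw [Finset.sum_comm, distUnif, Finset.mul_sum]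
        refine Finset.sum_congr rfl fun a _ => ?_
        rw [← Finset.mul_sum, hshift, mul_comm]

noncomputable def walk (μ : ℕ → Γ → ℝ) : ℕ → Γ → ℝ
  | 0 => Pi.single 1 1
  | t + 1 => conv (walk μ t) (μ t)

variable {μ : ℕ → Γ → ℝ}

lemma walk_add (μ : ℕ → Γ → ℝ) (t s : ℕ) :
    walk μ (t + s) = conv (walk μ t) (walk (fun r => μ (t + r)) s) := by
  induction s with
  | zero => exact (conv_single_one _).symm
  | succ s ih => rw [← add_assoc, walk, ih, conv_assoc]; rfl

lemma walk_nonneg (hμ0 : ∀ t x, 0 ≤ μ t x) (t : ℕ) (x : Γ) : 0 ≤ walk μ t x := by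
  induction t generalizing x with
  | zero => by_cases hx : x = 1 <;> simp [walk, hx]
  | succ t ih => exact conv_nonneg ih (hμ0 t) x

lemma sum_walk (hμ1 : ∀ t, ∑ x, μ t x = 1) (t : ℕ) : ∑ x, walk μ t x = 1 := by
  induction t with
  | zero => simp [walk]
  | succ t ih => rw [walk, sum_conv, ih, hμ1, one_mul]

lemma walk_mul_add {P : ℕ} (hper : ∀ t, μ (t + P) = μ t) (j s : ℕ) :
    walk μ (j * P + s) = conv (walk μ (j * P)) (walk μ s) := by
  have hshift : (fun r => μ (j * P + r)) = μ := by
    funext r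
    induction j with
    | zero => simp
    | succ j ih => rw [← ih, add_mul, one_mul, add_right_comm, hper]
  rw [walk_add, hshift]

section Action

variable {V : Type*} [AddCommGroup V] [Module ℝ V] {A : Γ → V →ₗ[ℝ] V}

lemma sum_conv_smul (hA : ∀ g h v, A (g * h) v = A h (A g v)) (p q : Γ → ℝ) (v : V) :
    ∑ x, conv p q x • A x v = ∑ y, q y • A y (∑ x, p x • A x v) := by
  simp only [map_sum, map_smul, Finset.smul_sum, smul_smul, conv, Finset.sum_smul]
  rw [Finset.sum_comm]
  conv_rhs => rw [Finset.sum_comm]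
  refine Finset.sum_congr rfl fun a _ => ?_
  refine (Equiv.sum_comp (Equiv.mulLeft a) _).symm.trans (Finset.sum_congr rfl fun y _ => ?_)
  simp [hA, mul_comm]

lemma eq_sum_walk_smul (hA1 : ∀ v, A 1 v = v) (hA : ∀ g h v, A (g * h) v = A h (A g v))
    {ρ : ℕ → V} (hρ : ∀ t, ρ (t + 1) = ∑ x, μ t x • A x (ρ t)) (t : ℕ) :
    ρ t = ∑ x, walk μ t x • A x (ρ 0) := by
  induction t with
  | zero => simp [walk, Pi.single_apply, hA1]
  | succ t ih => rw [hρ, ih, walk, sum_conv_smul hA]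

end Action

section Lazy

variable (hμ0 : ∀ t x, 0 ≤ μ t x) (hlazy : ∀ t, 0 < μ t 1)
include hμ0 hlazy

lemma walk_pos_add {t : ℕ} {x : Γ} (hx : 0 < walk μ t x) (s : ℕ) : 0 < walk μ (t + s) x := by
  induction s with
  | zero => exact hx
  | succ s ih =>
    rw [← add_assoc, walk]
    simpa only [mul_one] using conv_mul_pos (walk_nonneg hμ0 _) (hμ0 _) ih (hlazy (t + s))

lemma walk_apply_one_pos (t : ℕ) : 0 < walk μ t 1 := by
  simpa using walk_pos_add hμ0 hlazy (t := 0) (x := 1) (by simp [walk]) t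

lemma walk_pos_of_lt {t P : ℕ} (htP : t < P) {x : Γ} (hx : 0 < μ t x) : 0 < walk μ P x := by
  have hstep : 0 < walk μ (t + 1) x := by
    rw [walk]
    simpa only [one_mul] using
      conv_mul_pos (walk_nonneg hμ0 _) (hμ0 _) (walk_apply_one_pos hμ0 hlazy t) hx
  simpa [Nat.add_sub_cancel' htP] using walk_pos_add hμ0 hlazy hstep (P - (t + 1))

end Lazy

lemma walk_pos_of_mem_pow (hμ0 : ∀ t x, 0 ≤ μ t x) {P : ℕ} (hper : ∀ t, μ (t + P) = μ t)
    {j : ℕ} {x : Γ} (hx : x ∈ {y | 0 < walk μ P y} ^ j) : 0 < walk μ (j * P) x := by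
  induction j generalizing x with
  | zero => simp_all [walk]
  | succ j ih =>
    rw [pow_succ] at hx
    obtain ⟨a, ha, b, hb, rfl⟩ := Set.mem_mul.1 hx
    rw [add_one_mul, walk_mul_add hper]
    exact conv_mul_pos (walk_nonneg hμ0 _) (walk_nonneg hμ0 _) (ih ha) hb

omit [Fintype Γ] in
lemma exists_forall_mem_pow_of_closure_eq_top [Finite Γ] {s : Set Γ} (hs1 : (1 : Γ) ∈ s)
    (hs : Subgroup.closure s = ⊤) : ∃ L, ∀ x, x ∈ s ^ L := by
  have hlen : ∀ x, ∃ j, x ∈ s ^ j := by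
    intro x
    have hx : x ∈ Submonoid.closure s := by
      rw [← Subgroup.closure_toSubmonoid_of_finite, hs]; trivial
    induction hx using Submonoid.closure_induction with
    | mem y hy => exact ⟨1, by simpa using hy⟩
    | one => exact ⟨0, rfl⟩
    | mul y z _ _ hy hz =>
      obtain ⟨j, hj⟩ := hy
      obtain ⟨k, hk⟩ := hz
      exact ⟨j + k, pow_add s j k ▸ Set.mul_mem_mul hj hk⟩
  choose len hlen using hlen
  have := Fintype.ofFinite Γ
  exact ⟨univ.sup len, fun x =>
    Set.pow_subset_pow_right hs1 (Finset.le_sup (Finset.mem_univ x)) (hlen x)⟩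

section Convergence

variable (hμ0 : ∀ t x, 0 ≤ μ t x) (hμ1 : ∀ t, ∑ x, μ t x = 1) (hlazy : ∀ t, 0 < μ t 1)
  {P : ℕ} (hP : 0 < P) (hper : ∀ t, μ (t + P) = μ t)
  (hgen : Subgroup.closure {x | ∃ t < P, 0 < μ t x} = ⊤)
include hμ0 hμ1 hlazy hP hper hgen

theorem tendsto_distUnif_walk : Tendsto (fun t => distUnif (walk μ t)) atTop (nhds 0) := by
  have hone : 0 < walk μ P 1 := walk_apply_one_pos hμ0 hlazy P
  have hsupp : {x | ∃ t < P, 0 < μ t x} ⊆ {y | 0 < walk μ P y} := by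
    rintro x ⟨t, ht, hx⟩
    exact walk_pos_of_lt hμ0 hlazy ht hx
  obtain ⟨L, hL⟩ : ∃ L, ∀ x, x ∈ {y | 0 < walk μ P y} ^ L :=
    exists_forall_mem_pow_of_closure_eq_top hone (eq_top_mono (Subgroup.closure_mono hsupp) hgen)
  set M := (L + 1) * P
  have hfull : ∀ x, 0 < walk μ M x := fun x =>
    walk_pos_of_mem_pow hμ0 hper (Set.pow_subset_pow_right hone L.le_succ (hL x))
  obtain ⟨x₀, -, hx₀⟩ := Finset.univ.exists_min_image (walk μ M) Finset.univ_nonempty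
  have hε : ∀ x, walk μ M x₀ ≤ walk μ M x := fun x => hx₀ x (Finset.mem_univ x)
  have hεcard : 0 < walk μ M x₀ * Fintype.card Γ :=
    mul_pos (hfull x₀) (Nat.cast_pos.2 Fintype.card_pos)
  refine tendsto_zero_of_antitone_of_le_mul (M := M) (fun t => distUnif_nonneg _) ?_ (by positivity)
    (sub_nonneg.2 (mul_card_le_one (sum_walk hμ1 M) hε)) (by linarith) fun j => ?_
  · refine antitone_nat_of_succ_le fun t => ?_
    simpa [walk] using distUnif_conv_le (sum_walk hμ1 t) (hμ1 t) (hμ0 t)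
  · have hj : j * M = j * (L + 1) * P := by ring
    rw [show (j + 1) * M = j * (L + 1) * P + M by ring, walk_mul_add hper, ← hj]
    exact distUnif_conv_le (sum_walk hμ1 _) (sum_walk hμ1 M) hε

theorem tendsto_walk_apply (x : Γ) :
    Tendsto (fun t => walk μ t x) atTop (nhds (Fintype.card Γ : ℝ)⁻¹) := by
  have hx : Tendsto (fun t => walk μ t x - (Fintype.card Γ : ℝ)⁻¹) atTop (nhds 0) :=
    squeeze_zero_norm (fun t => abs_sub_le_distUnif _ x)
      (tendsto_distUnif_walk hμ0 hμ1 hlazy hP hper hgen)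
  simpa using hx.add_const (Fintype.card Γ : ℝ)⁻¹

theorem tendsto_sum_walk_smul {V : Type*} [AddCommMonoid V] [Module ℝ V] [TopologicalSpace V]
    [ContinuousAdd V] [ContinuousSMul ℝ V] (B : Γ → V) :
    Tendsto (fun t => ∑ x, walk μ t x • B x) atTop
      (nhds ((Fintype.card Γ : ℝ)⁻¹ • ∑ x, B x)) := by
  rw [Finset.smul_sum]
  exact tendsto_finsetSum _ fun x _ =>
    (tendsto_walk_apply hμ0 hμ1 hlazy hP hper hgen x).smul_const (B x)

end Convergence

end GroupWalk

lemma permU_one (n : ℕ) : permU n 1 = 1 := by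
  ext f g
  simp [permU, Matrix.one_apply, eq_comm]

lemma permU_mul (n : ℕ) (a b : Equiv.Perm (Fin n)) :
    permU n (a * b) = permU n a * permU n b := by
  ext f h
  simp only [permU, Matrix.mul_apply, Matrix.of_apply, ite_mul, one_mul, zero_mul,
    Finset.sum_ite_eq', Finset.mem_univ, if_true, Equiv.Perm.coe_mul]
  rfl

noncomputable def permConj (n : ℕ) (g : Equiv.Perm (Fin n)) :
    Matrix (Fin n → Fin 2) (Fin n → Fin 2) ℂ →ₗ[ℝ] Matrix (Fin n → Fin 2) (Fin n → Fin 2) ℂ :=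
  LinearMap.mulLeftRight ℝ ((permU n g)ᴴ, permU n g)

lemma permConj_apply (n : ℕ) (g : Equiv.Perm (Fin n))
    (X : Matrix (Fin n → Fin 2) (Fin n → Fin 2) ℂ) :
    permConj n g X = (permU n g)ᴴ * X * permU n g :=
  LinearMap.mulLeftRight_apply _ _ _

lemma permConj_one (n : ℕ) (X : Matrix (Fin n → Fin 2) (Fin n → Fin 2) ℂ) :
    permConj n 1 X = X := by
  simp [permConj_apply, permU_one]

lemma permConj_mul (n : ℕ) (g h : Equiv.Perm (Fin n))
    (X : Matrix (Fin n → Fin 2) (Fin n → Fin 2) ℂ) :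
    permConj n (g * h) X = permConj n h (permConj n g X) := by
  simp only [permConj_apply, permU_mul, conjTranspose_mul, Matrix.mul_assoc]

lemma Equiv.Perm.IsCycle.pow_card_support {α : Type*} [DecidableEq α] [Fintype α]
    {f : Equiv.Perm α} (hf : f.IsCycle) : f ^ f.support.card = 1 := by
  rw [← hf.orderOf]; exact pow_orderOf_eq_one f

open GroupWalk in
theorem deterministic_quantum_clique_gossip_limit_general
    {n c : ℕ}
    (e : Fin c → Finset (Fin n)) (he : ∀ m, 2 ≤ (e m).card)
    (π : Fin c → Equiv.Perm (Fin n))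
    (hπ : ∀ m, (π m).IsCycle ∧ (π m).support = e m)
    (σ : ℕ → Fin c) (P : ℕ) (hP : 0 < P)
    (hperiodic : ∀ t, σ (t + P) = σ t)
    (hattain : ∀ m : Fin c, ∃ s < P, σ s = m)
    (ρ : ℕ → Matrix (Fin n → Fin 2) (Fin n → Fin 2) ℂ)
    (hrec : ∀ t, ρ (t + 1) = ((e (σ t)).card : ℂ)⁻¹ •
      ∑ τ ∈ Finset.Icc 1 (e (σ t)).card,
        (permU n (π (σ t) ^ τ))ᴴ * ρ t * permU n (π (σ t) ^ τ)) :
    Tendsto ρ atTop (nhds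
      ((Nat.card (Subgroup.closure (Set.range π)) : ℂ)⁻¹ •
        ∑ g : Subgroup.closure (Set.range π),
          (permU n (g : Equiv.Perm (Fin n)))ᴴ * ρ 0 * permU n (g : Equiv.Perm (Fin n)))) := by
  set G := Subgroup.closure (Set.range π)
  let gen (m : Fin c) (τ : ℕ) : G :=
    ⟨π m ^ τ, pow_mem (Subgroup.subset_closure (Set.mem_range_self m)) τ⟩
  let μ (t : ℕ) : G → ℝ := pushUniform (Icc 1 (e (σ t)).card) (gen (σ t))
  have hk : ∀ m, 1 ≤ (e m).card := fun m => one_le_two.trans (he m)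
  have hgen_order : ∀ m, gen m (e m).card = 1 :=
    fun m => Subtype.ext ((hπ m).2 ▸ (hπ m).1.pow_card_support)
  have hclosure : Subgroup.closure {x : G | ∃ t < P, 0 < μ t x} = ⊤ := by
    refine eq_top_mono (Subgroup.closure_mono ?_) Subgroup.closure_closure_coe_preimage
    rintro x ⟨m, hm⟩
    obtain ⟨s, hs, rfl⟩ := hattain m
    have hx : x = gen (σ s) 1 := Subtype.ext (by simp [gen, hm])
    exact ⟨s, hs, hx ▸ pushUniform_apply_pos _ _ (Finset.left_mem_Icc.2 (hk _))⟩
  have hrep : ∀ t, ρ t = ∑ x : G, walk μ t x • permConj n x (ρ 0) := by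
    refine eq_sum_walk_smul (A := fun x : G => permConj n x) (permConj_one n)
      (fun g h => permConj_mul n g h) fun t => ?_
    rw [hrec t, sum_pushUniform_smul, ← Complex.coe_smul]
    simp [permConj_apply, gen]
  have hlim := tendsto_sum_walk_smul (fun t => pushUniform_nonneg _ _)
    (fun t => sum_pushUniform _ _ (Finset.nonempty_Icc.2 (hk _)))
    (fun t => hgen_order (σ t) ▸ pushUniform_apply_pos _ _ (Finset.right_mem_Icc.2 (hk _))) hP
    (fun t => by simp only [hperiodic]) hclosure (fun x : G => permConj n x (ρ 0))
  rw [Nat.card_eq_fintype_card, ← Complex.ofReal_natCast, ← Complex.ofReal_inv, Complex.coe_smul]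
  simpa only [permConj_apply] using (tendsto_congr hrep).2 hlim

/-- Theorem 1(ii): the deterministic quantum clique-gossip algorithm converges, and its
limit is the average of `ρ(0)` over the unitary orbit of the subgroup `S_E` generated by the
cyclic permutations associated with the generalized edges. -/
theorem deterministic_quantum_clique_gossip_limit
    {n c : ℕ} (hn : 1 ≤ n)
    (e : Fin c → Finset (Fin n)) (he : ∀ m, 2 ≤ (e m).card)
    (π : Fin c → Equiv.Perm (Fin n))
    (hπ : ∀ m, (π m).IsCycle ∧ (π m).support = e m)
    (σ : ℕ → Fin c) (P : ℕ) (hP : 0 < P)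
    (hperiodic : ∀ t, σ (t + P) = σ t)
    (hattain : ∀ m : Fin c, ∃ s < P, σ s = m)
    (ρ : ℕ → Matrix (Fin n → Fin 2) (Fin n → Fin 2) ℂ)
    (hρpsd : (ρ 0).PosSemidef) (hρtr : (ρ 0).trace = 1)
    (hrec : ∀ t, ρ (t + 1) = ((e (σ t)).card : ℂ)⁻¹ •
      ∑ τ ∈ Finset.Icc 1 (e (σ t)).card,
        (permU n (π (σ t) ^ τ))ᴴ * ρ t * permU n (π (σ t) ^ τ)) :
    Tendsto ρ atTop (nhds
      ((Nat.card (Subgroup.closure (Set.range π)) : ℂ)⁻¹ •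
        ∑ g : Subgroup.closure (Set.range π),
          (permU n (g : Equiv.Perm (Fin n)))ᴴ * ρ 0 * permU n (g : Equiv.Perm (Fin n)))) :=
  deterministic_quantum_clique_gossip_limit_general e he π hπ σ P hP hperiodic hattain ρ hrec
end

section
/- Let n ≥ 2 and 2 ≤ k ≤ n. Let 𝖶 be a random matrix distributed uniformly over the set of all clique-averaging matrices W_S = (1/k)·χ_S χ_Sᵀ + Σ_{j∉S} e_j e_jᵀ, where S ranges over all C(n,k) k-element subsets of {1,…,n}. Then 𝔼[𝖶ᵀ𝖶] = 𝔼[𝖶] = ((k−1)/(n(n−1)))·𝟙𝟙ᵀ + ((n−k+1)/n − (k−1)/(n(n−1)))·I_n. -/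
/-!
`W_S` is the sum of the rank-one projection `|S|⁻¹ χ_S χ_Sᵀ` and the diagonal projection onto
the coordinates outside `S`. These annihilate each other, so `W_S` is a symmetric idempotent and
`W_Sᵀ W_S = W_S`. The expectation is computed entrywise: a diagonal entry counts the
`C(n-1, k-1)` subsets containing `i`, an off-diagonal entry the `C(n-2, k-2)` subsets containing
both `i` and `j`, and `n C(n-1, k-1) = k C(n, k)` turns these counts into the stated coefficients.
-/

open Matrix Finset

/-- The clique-averaging matrix `W_S = (1/|S|)·χ_S χ_Sᵀ + Σ_{j∉S} e_j e_jᵀ`. -/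
noncomputable def cliqueW (n : ℕ) (S : Finset (Fin n)) : Matrix (Fin n) (Fin n) ℝ :=
  (S.card : ℝ)⁻¹ •
      Matrix.vecMulVec (fun i => if i ∈ S then 1 else 0) (fun i => if i ∈ S then 1 else 0)
    + ∑ j ∈ Sᶜ, Matrix.vecMulVec (Pi.single j 1) (Pi.single j 1)

theorem Matrix.sum_vecMulVec_single_self {ι R : Type*} [Fintype ι] [DecidableEq ι] [Semiring R]
    (s : Finset ι) :
    ∑ j ∈ s, vecMulVec (Pi.single j (1 : R)) (Pi.single j 1) =
      diagonal fun i => if i ∈ s then 1 else 0 := by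
  simp_rw [← single_eq_single_vecMulVec_single, ← sum_single_eq_diagonal, apply_ite (single _ _),
    single_zero, sum_ite_mem, univ_inter]

theorem Matrix.isIdempotentElem_smul_vecMulVec_add_diagonal {ι K : Type*} [Fintype ι]
    [DecidableEq ι] [Field K] {v d : ι → K} (hv : v ⬝ᵥ v ≠ 0) (hd : ∀ i, d i * d i = d i)
    (hvd : ∀ i, v i * d i = 0) :
    IsIdempotentElem ((v ⬝ᵥ v)⁻¹ • vecMulVec v v + diagonal d) := by
  have hvd' : ∀ i, d i * v i = 0 := fun i => by rw [mul_comm, hvd]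
  refine .add ?_ ?_ ?_
  · rw [IsIdempotentElem, smul_mul_smul, vecMulVec_mul_vecMulVec, vecMulVec_smul, smul_smul,
      mul_assoc, inv_mul_cancel₀ hv, mul_one]
  · rw [IsIdempotentElem, diagonal_mul_diagonal]
    exact congrArg diagonal (funext hd)
  · have hvD : v ᵥ* diagonal d = 0 := funext fun i => by rw [vecMul_diagonal, hvd, Pi.zero_apply]
    have hDv : diagonal d *ᵥ v = 0 := funext fun i => by rw [mulVec_diagonal, hvd', Pi.zero_apply]
    rw [smul_mul_assoc, mul_smul_comm, vecMulVec_mul, mul_vecMulVec, hvD, hDv, vecMulVec_zero,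
      zero_vecMulVec, smul_zero, add_zero]

theorem Finset.dotProduct_indicator_self {ι R : Type*} [Fintype ι] [DecidableEq ι]
    [NonAssocSemiring R] (s : Finset ι) :
    (fun i => if i ∈ s then (1 : R) else 0) ⬝ᵥ (fun i => if i ∈ s then 1 else 0) = #s := by
  simp [dotProduct]

theorem Nat.cast_choose_sub_one_sub_one {K : Type*} [Field K] [CharZero K] {n k : ℕ}
    (hn : 1 ≤ n) (hk : 1 ≤ k) : ((n - 1).choose (k - 1) : K) = k * n.choose k / n := by
  obtain ⟨m, rfl⟩ := Nat.exists_eq_add_of_le' hn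
  obtain ⟨l, rfl⟩ := Nat.exists_eq_add_of_le' hk
  rw [eq_div_iff (Nat.cast_ne_zero.2 m.succ_ne_zero), mul_comm]
  exact_mod_cast by simpa [mul_comm] using Nat.add_one_mul_choose_eq m l

section cliqueW

variable {n : ℕ} (S : Finset (Fin n))

theorem cliqueW_eq :
    cliqueW n S = (#S : ℝ)⁻¹ • vecMulVec (fun i => if i ∈ S then 1 else 0)
      (fun i => if i ∈ S then 1 else 0) + diagonal fun i => if i ∈ S then 0 else 1 := by
  simp_rw [cliqueW, sum_vecMulVec_single_self, mem_compl, ite_not]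

theorem cliqueW_transpose : (cliqueW n S)ᵀ = cliqueW n S := by
  rw [cliqueW_eq, transpose_add, transpose_smul, transpose_vecMulVec, diagonal_transpose]

theorem isIdempotentElem_cliqueW (hS : S.Nonempty) : IsIdempotentElem (cliqueW n S) := by
  have h := isIdempotentElem_smul_vecMulVec_add_diagonal
    (v := fun i => if i ∈ S then (1 : ℝ) else 0) (d := fun i => if i ∈ S then 0 else 1)
    (by rw [dotProduct_indicator_self]; exact_mod_cast hS.card_pos.ne')
    (fun i => by split_ifs <;> norm_num) (fun i => by split_ifs <;> norm_num)
  rwa [dotProduct_indicator_self, ← cliqueW_eq] at h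

theorem cliqueW_apply (i j : Fin n) :
    cliqueW n S i j = if i ∈ S ∧ j ∈ S then (#S : ℝ)⁻¹ else if i = j then 1 else 0 := by
  rw [cliqueW_eq, Matrix.add_apply, Matrix.smul_apply, vecMulVec_apply, diagonal_apply,
    smul_eq_mul]
  split_ifs <;> simp_all

theorem cliqueW_transpose_mul_self (hS : S.Nonempty) :
    (cliqueW n S)ᵀ * cliqueW n S = cliqueW n S := by
  rw [cliqueW_transpose, (isIdempotentElem_cliqueW S hS).eq]

end cliqueW

section expectation

variable {n k : ℕ}

theorem sum_powersetCard_cliqueW_apply_self (hk : 1 ≤ k) (i : Fin n) :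
    ∑ S ∈ powersetCard k univ, cliqueW n S i i =
      (k : ℝ)⁻¹ * (n - 1).choose (k - 1) + (n.choose k - (n - 1).choose (k - 1)) := by
  have hentry : ∀ S ∈ powersetCard k univ, cliqueW n S i i = if i ∈ S then (k : ℝ)⁻¹ else 1 :=
    fun S hS => by rw [cliqueW_apply, (mem_powersetCard.1 hS).2]; simp only [and_self, ite_true]
  have hmem : #{S ∈ powersetCard k univ | i ∈ S} = (n - 1).choose (k - 1) := by
    simpa using card_filter_powersetCard_subset {i} univ k (subset_univ _) (by simpa)
  have hnot :=
    card_filter_add_card_filter_not (s := powersetCard k (univ : Finset (Fin n))) (i ∈ ·)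
  rw [card_powersetCard, card_univ, Fintype.card_fin] at hnot
  rw [sum_congr rfl hentry, sum_ite, sum_const, sum_const, ← hmem, ← hnot, nsmul_eq_mul,
    nsmul_eq_mul]
  push_cast
  ring

theorem sum_powersetCard_cliqueW_apply_of_ne (hk : 2 ≤ k) {i j : Fin n} (hij : i ≠ j) :
    ∑ S ∈ powersetCard k univ, cliqueW n S i j = (k : ℝ)⁻¹ * (n - 2).choose (k - 2) := by
  have hentry : ∀ S ∈ powersetCard k univ,
      cliqueW n S i j = if {i, j} ⊆ S then (k : ℝ)⁻¹ else 0 := fun S hS => by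
    rw [cliqueW_apply, (mem_powersetCard.1 hS).2]
    simp only [insert_subset_iff, singleton_subset_iff, if_neg hij]
  rw [sum_congr rfl hentry, ← sum_filter, sum_const, card_filter_powersetCard_subset _ _ _
    (subset_univ _) (by rwa [card_pair hij]), card_pair hij, card_univ, Fintype.card_fin,
    nsmul_eq_mul, mul_comm]

end expectation

theorem expected_cliqueW_general
    {n k : ℕ} (hk : 2 ≤ k) (hkn : k ≤ n) :
    (n.choose k : ℝ)⁻¹ • (∑ S ∈ Finset.powersetCard k (Finset.univ : Finset (Fin n)),
        (cliqueW n S)ᵀ * cliqueW n S)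
      = (n.choose k : ℝ)⁻¹ • (∑ S ∈ Finset.powersetCard k (Finset.univ : Finset (Fin n)),
        cliqueW n S)
    ∧ (n.choose k : ℝ)⁻¹ • (∑ S ∈ Finset.powersetCard k (Finset.univ : Finset (Fin n)),
        cliqueW n S)
      = (((k : ℝ) - 1) / ((n : ℝ) * ((n : ℝ) - 1))) •
          Matrix.vecMulVec (fun _ => (1 : ℝ)) (fun _ => 1)
        + ((((n : ℝ) - (k : ℝ) + 1) / (n : ℝ) - ((k : ℝ) - 1) / ((n : ℝ) * ((n : ℝ) - 1))) •
          (1 : Matrix (Fin n) (Fin n) ℝ)) := by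
  have hproj : ∀ S ∈ powersetCard k (univ : Finset (Fin n)),
      (cliqueW n S)ᵀ * cliqueW n S = cliqueW n S := fun S hS =>
    cliqueW_transpose_mul_self S (card_pos.1 (by rw [(mem_powersetCard.1 hS).2]; omega))
  refine ⟨by rw [sum_congr rfl hproj], ?_⟩
  have hk0 : (k : ℝ) ≠ 0 := by exact_mod_cast (by omega : k ≠ 0)
  have hn0 : (n : ℝ) ≠ 0 := by exact_mod_cast (by omega : n ≠ 0)
  have hn1 : (n : ℝ) - 1 ≠ 0 := sub_ne_zero.2 (by exact_mod_cast (by omega : n ≠ 1))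
  have hC : (n.choose k : ℝ) ≠ 0 := by exact_mod_cast (Nat.choose_pos hkn).ne'
  have hN1 := Nat.cast_choose_sub_one_sub_one (K := ℝ) (by omega : 1 ≤ n) (by omega : 1 ≤ k)
  have hN2 :=
    Nat.cast_choose_sub_one_sub_one (K := ℝ) (by omega : 1 ≤ n - 1) (by omega : 1 ≤ k - 1)
  simp only [Nat.sub_sub, Nat.reduceAdd, Nat.cast_pred (by omega : 0 < n),
    Nat.cast_pred (by omega : 0 < k)] at hN2
  ext i j
  simp only [Matrix.smul_apply, Matrix.sum_apply, Matrix.add_apply, vecMulVec_apply, one_apply,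
    smul_eq_mul]
  rcases eq_or_ne i j with rfl | hij
  · rw [sum_powersetCard_cliqueW_apply_self (by omega), if_pos rfl, hN1]
    field_simp
    ring
  · rw [sum_powersetCard_cliqueW_apply_of_ne hk hij, if_neg hij, hN2, hN1]
    field_simp
    ring

/-- Key computation in the proof of Theorem 3: for `𝖶` uniform over the clique-averaging
matrices of the `C(n,k)` `k`-element subsets of `{1,…,n}`,
`𝔼[𝖶ᵀ𝖶] = 𝔼[𝖶] = ((k−1)/(n(n−1)))𝟙𝟙ᵀ + ((n−k+1)/n − (k−1)/(n(n−1)))I`. -/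
theorem expected_cliqueW
    {n k : ℕ} (hn : 2 ≤ n) (hk : 2 ≤ k) (hkn : k ≤ n) :
    (n.choose k : ℝ)⁻¹ • (∑ S ∈ Finset.powersetCard k (Finset.univ : Finset (Fin n)),
        (cliqueW n S)ᵀ * cliqueW n S)
      = (n.choose k : ℝ)⁻¹ • (∑ S ∈ Finset.powersetCard k (Finset.univ : Finset (Fin n)),
        cliqueW n S)
    ∧ (n.choose k : ℝ)⁻¹ • (∑ S ∈ Finset.powersetCard k (Finset.univ : Finset (Fin n)),
        cliqueW n S)
      = (((k : ℝ) - 1) / ((n : ℝ) * ((n : ℝ) - 1))) •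
          Matrix.vecMulVec (fun _ => (1 : ℝ)) (fun _ => 1)
        + ((((n : ℝ) - (k : ℝ) + 1) / (n : ℝ) - ((k : ℝ) - 1) / ((n : ℝ) * ((n : ℝ) - 1))) •
          (1 : Matrix (Fin n) (Fin n) ℝ)) :=
  expected_cliqueW_general hk hkn
end

section
/- Let n ≥ 3 and 2 ≤ k ≤ n−1, and let ν = (n−k)/(n−1). Let (S_t)_{t≥0} be i.i.d. random variables, each uniformly distributed over the k-element subsets of {1,…,n}, and for an initial vector x(0) ∈ ℝⁿ define x(t+1) = W_{S_t} x(t), where W_S is the clique-averaging matrix of S. Let x̄ = (1/n)Σ_{j=1}^n x_j(0). Then for every t ≥ 0, 𝔼[‖x(t) − x̄·𝟙‖²] = ν^t · ‖x(0) − x̄·𝟙‖². In particular 0 < max over initial states with x(0) ≠ x̄𝟙 of limsup_{t→∞} 𝔼[‖x(t) − x̄𝟙‖²]/ν^t < ∞. -/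
open Matrix Finset

theorem Fintype.sum_piFinset_const_succ {β M : Type*} [AddCommMonoid M] (A : Finset β) (t : ℕ)
    (f : (Fin (t + 1) → β) → M) :
    ∑ ω ∈ Fintype.piFinset (fun _ : Fin (t + 1) => A), f ω
      = ∑ S ∈ A, ∑ ω ∈ Fintype.piFinset (fun _ : Fin t => A), f (Fin.cons S ω) := by
  rw [← sum_product']
  refine sum_nbij' (fun ω => (ω 0, Fin.tail ω)) (fun p => Fin.cons p.1 p.2) ?_ ?_ ?_ ?_ ?_ <;>
    simp [Fin.forall_fin_succ, Fin.tail]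

theorem Matrix.sum_piFinset_ofFn_reverse_prod_mulVec {ι β R K : Type*} [Fintype ι] [DecidableEq ι]
    [Semiring R] [Semiring K] (A : Finset β) (M : β → Matrix ι ι R) (p : (ι → R) → Prop)
    (Q : (ι → R) → K) (c : K) (hp : ∀ S ∈ A, ∀ v, p v → p (M S *ᵥ v))
    (hQ : ∀ v, p v → ∑ S ∈ A, Q (M S *ᵥ v) = c * Q v) (t : ℕ) {v : ι → R} (hv : p v) :
    ∑ ω ∈ Fintype.piFinset (fun _ : Fin t => A),
        Q ((List.ofFn fun τ => M (ω τ)).reverse.prod *ᵥ v) = c ^ t * Q v := by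
  induction t generalizing v with
  | zero => simp
  | succ t ih =>
    simp only [Fintype.sum_piFinset_const_succ, List.ofFn_succ, Fin.cons_zero, Fin.cons_succ,
      List.reverse_cons, List.prod_append, List.prod_singleton, ← mulVec_mulVec]
    rw [sum_congr rfl fun S hS => ih (hp S hS v hv), ← mul_sum, hQ v hv, pow_succ, mul_assoc]

namespace Finset

variable {α : Type*} [DecidableEq α]

theorem sum_powersetCard_sum {M : Type*} [AddCommMonoid M] (s : Finset α) {k : ℕ} (hk : k ≠ 0)
    (f : α → M) :
    ∑ T ∈ s.powersetCard k, ∑ i ∈ T, f i = (#s - 1).choose (k - 1) • ∑ i ∈ s, f i := by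
  rw [sum_comm' (t' := s) (s' := fun i => (s.powersetCard k).filter ({i} ⊆ ·)), smul_sum]
  · refine sum_congr rfl fun i hi => ?_
    rw [sum_const, card_filter_powersetCard_subset _ _ _ (by simpa using hi) (by simp; omega),
      card_singleton]
  · intro T i
    simp only [mem_filter, mem_powersetCard, singleton_subset_iff]
    constructor
    · rintro ⟨⟨hT, hcard⟩, hi⟩; exact ⟨⟨⟨hT, hcard⟩, hi⟩, hT hi⟩
    · rintro ⟨⟨⟨hT, hcard⟩, hi⟩, -⟩; exact ⟨⟨hT, hcard⟩, hi⟩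

theorem sum_powersetCard_sum_offDiag {M : Type*} [AddCommMonoid M] (s : Finset α) {k : ℕ}
    (hk : 2 ≤ k) (f : α × α → M) :
    ∑ T ∈ s.powersetCard k, ∑ p ∈ T.offDiag, f p
      = (#s - 2).choose (k - 2) • ∑ p ∈ s.offDiag, f p := by
  rw [sum_comm' (t' := s.offDiag) (s' := fun p => (s.powersetCard k).filter ({p.1, p.2} ⊆ ·)),
    smul_sum]
  · refine sum_congr rfl fun p hp => ?_
    obtain ⟨h1, h2, h12⟩ := mem_offDiag.mp hp
    rw [sum_const, card_filter_powersetCard_subset _ _ _ (by simp [insert_subset_iff, *])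
      (by rw [card_pair h12]; omega), card_pair h12]
  · intro T p
    simp only [mem_filter, mem_powersetCard, mem_offDiag, insert_subset_iff, singleton_subset_iff]
    constructor
    · rintro ⟨⟨hT, hcard⟩, h1, h2, h12⟩; exact ⟨⟨⟨hT, hcard⟩, h1, h2⟩, hT h1, hT h2, h12⟩
    · rintro ⟨⟨⟨hT, hcard⟩, h1, h2⟩, -, -, h12⟩; exact ⟨⟨hT, hcard⟩, h1, h2, h12⟩

theorem sq_sum_eq_sum_sq_add_sum_offDiag {R : Type*} [CommSemiring R] (s : Finset α)
    (f : α → R) :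
    (∑ i ∈ s, f i) ^ 2 = ∑ i ∈ s, f i ^ 2 + ∑ p ∈ s.offDiag, f p.1 * f p.2 := by
  rw [sq, sum_mul_sum, ← sum_product', ← diag_union_offDiag, sum_union (disjoint_diag_offDiag s)]
  simp [sq, diag]

theorem sum_powersetCard_sq_sum_of_sum_eq_zero {R : Type*} [CommRing R] (s : Finset α) {k : ℕ}
    (hk : 2 ≤ k) (hks : k ≤ #s) {y : α → R} (hy : ∑ i ∈ s, y i = 0) :
    ∑ T ∈ s.powersetCard k, (∑ i ∈ T, y i) ^ 2 = (#s - 2).choose (k - 1) • ∑ i ∈ s, y i ^ 2 := by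
  have hoff : ∑ p ∈ s.offDiag, y p.1 * y p.2 = -∑ i ∈ s, y i ^ 2 := by
    have h := sq_sum_eq_sum_sq_add_sum_offDiag s y
    rw [hy] at h
    linear_combination -h
  have hpascal : (#s - 1).choose (k - 1) = (#s - 2).choose (k - 2) + (#s - 2).choose (k - 1) := by
    obtain ⟨m, hm⟩ : ∃ m, #s = m + 2 := ⟨#s - 2, by omega⟩
    obtain ⟨j, rfl⟩ : ∃ j, k = j + 2 := ⟨k - 2, by omega⟩
    simp [hm, Nat.choose_succ_succ']
  simp_rw [sq_sum_eq_sum_sq_add_sum_offDiag]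
  rw [sum_add_distrib, sum_powersetCard_sum s (by omega), sum_powersetCard_sum_offDiag s hk, hoff,
    hpascal, add_smul, smul_neg]
  abel

end Finset

theorem Nat.choose_sub_choose_add_choose_div_eq {n k : ℕ} (hk : 1 ≤ k) (hkn : k ≤ n) (hn : 2 ≤ n) :
    (n.choose k : ℝ) - (n - 1).choose (k - 1) + (n - 2).choose (k - 1) / k
      = n.choose k * ((n - k) / (n - 1)) := by
  obtain ⟨N, rfl⟩ : ∃ N, n = N + 2 := ⟨n - 2, by omega⟩
  obtain ⟨K, rfl⟩ : ∃ K, k = K + 1 := ⟨k - 1, by omega⟩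
  have hpascal : ((N + 2).choose (K + 1) : ℝ) = (N + 1).choose K + (N + 1).choose (K + 1) := by
    exact_mod_cast Nat.choose_succ_succ' (N + 1) K
  have h1 : ((N : ℝ) + 1) * N.choose K = (N + 1).choose (K + 1) * (K + 1) := by
    exact_mod_cast Nat.add_one_mul_choose_eq N K
  have h2 : ((N + 1).choose (K + 1) : ℝ) * (N + 2) = (N + 2).choose (K + 1) * (N + 1 - K) := by
    have h := Nat.choose_mul_succ_eq (N + 1) (K + 1)
    rw [Nat.add_sub_add_right] at h
    rify [show K ≤ N + 1 by omega] at h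
    linear_combination h
  simp only [Nat.add_sub_cancel]
  push_cast
  rw [show (N + 2 - 1 : ℝ) = N + 1 by ring, show (N + 2 - (K + 1) : ℝ) = N + 1 - K by ring]
  field_simp
  linear_combination (K + 1 : ℝ) * h2 + h1 + (K + 1 : ℝ) * (N + 1) * hpascal

section cliqueW

variable {n : ℕ}

theorem cliqueW_mulVec_apply (S : Finset (Fin n)) (y : Fin n → ℝ) (i : Fin n) :
    (cliqueW n S *ᵥ y) i = if i ∈ S then (∑ j ∈ S, y j) / #S else y i := by
  split_ifs with hi <;>
    simp [cliqueW, add_mulVec, smul_mulVec, sum_mulVec, vecMulVec_mulVec, dotProduct,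
      Pi.single_apply, hi, div_eq_inv_mul]

theorem cliqueW_mulVec_sub_const (S : Finset (Fin n)) (v : Fin n → ℝ) (c : ℝ) (i : Fin n) :
    (cliqueW n S *ᵥ fun j => v j - c) i = (cliqueW n S *ᵥ v) i - c := by
  simp only [cliqueW_mulVec_apply]
  split_ifs with hi
  · have : (#S : ℝ) ≠ 0 := Nat.cast_ne_zero.mpr (card_ne_zero_of_mem hi)
    rw [sum_sub_distrib, sum_const, nsmul_eq_mul]
    field_simp
  · rfl

theorem sum_cliqueW_mulVec (S : Finset (Fin n)) (y : Fin n → ℝ) :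
    ∑ i, (cliqueW n S *ᵥ y) i = ∑ i, y i := by
  simp only [cliqueW_mulVec_apply, sum_ite, filter_mem_eq_inter, univ_inter,
    filter_notMem_eq_sdiff, ← compl_eq_univ_sdiff, sum_const, nsmul_eq_mul, ← sum_add_sum_compl S y]
  obtain rfl | hS := S.eq_empty_or_nonempty
  · simp
  · rw [mul_div_cancel₀ _ (by positivity)]

theorem sum_sq_cliqueW_mulVec (S : Finset (Fin n)) (y : Fin n → ℝ) :
    ∑ i, (cliqueW n S *ᵥ y) i ^ 2 = ∑ i, y i ^ 2 - ∑ i ∈ S, y i ^ 2 + (∑ i ∈ S, y i) ^ 2 / #S := by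
  simp only [cliqueW_mulVec_apply, apply_ite (· ^ 2), sum_ite, filter_mem_eq_inter, univ_inter,
    filter_notMem_eq_sdiff, ← compl_eq_univ_sdiff, sum_const, nsmul_eq_mul,
    ← sum_add_sum_compl S (y · ^ 2)]
  obtain rfl | hS := S.eq_empty_or_nonempty
  · simp
  · field_simp
    ring

theorem sum_powersetCard_sum_sq_cliqueW_mulVec {k : ℕ} (hk : 2 ≤ k) (hkn : k ≤ n)
    {y : Fin n → ℝ} (hy : ∑ i, y i = 0) :
    ∑ S ∈ powersetCard k univ, ∑ i, (cliqueW n S *ᵥ y) i ^ 2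
      = n.choose k * (((n : ℝ) - k) / ((n : ℝ) - 1)) * ∑ i, y i ^ 2 := by
  calc ∑ S ∈ powersetCard k univ, ∑ i, (cliqueW n S *ᵥ y) i ^ 2
      = ∑ S ∈ powersetCard k univ,
          (∑ i, y i ^ 2 - ∑ i ∈ S, y i ^ 2 + (∑ i ∈ S, y i) ^ 2 / k) :=
        sum_congr rfl fun S hS => by rw [sum_sq_cliqueW_mulVec, (mem_powersetCard.mp hS).2]
    _ = ((n.choose k : ℝ) - (n - 1).choose (k - 1) + (n - 2).choose (k - 1) / k)
          * ∑ i, y i ^ 2 := by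
        rw [sum_add_distrib, sum_sub_distrib, ← sum_div, sum_const,
          sum_powersetCard_sum _ (by omega), sum_powersetCard_sq_sum_of_sum_eq_zero _ hk
            (by simpa using hkn) hy]
        simp only [card_powersetCard, card_univ, Fintype.card_fin, nsmul_eq_mul]
        ring
    _ = _ := by rw [Nat.choose_sub_choose_add_choose_div_eq (by omega) hkn (by omega)]

end cliqueW

/-- The expectation over the first `t` choices is the uniform average over all
`ω : Fin t → {k-subsets}`, and `x(t) = W_{S_{t−1}} ⋯ W_{S_0} x(0)` is
`(List.ofFn fun τ => W (ω τ)).reverse.prod *ᵥ x0`. -/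
theorem randomized_clique_gossip_meanSquare_rate_general
    {n k : ℕ} (hk : 2 ≤ k) (hkn : k ≤ n - 1)
    (x0 : Fin n → ℝ) (xbar : ℝ) (hxbar : xbar = (∑ j, x0 j) / n) :
    ∀ t : ℕ,
      (∑ ω ∈ Fintype.piFinset
            (fun _ : Fin t => Finset.powersetCard k (Finset.univ : Finset (Fin n))),
          ∑ i, ((((List.ofFn fun τ : Fin t => cliqueW n (ω τ)).reverse.prod *ᵥ x0) i - xbar) ^ 2))
          / (n.choose k : ℝ) ^ t
        = (((n : ℝ) - (k : ℝ)) / ((n : ℝ) - 1)) ^ t * ∑ i, (x0 i - xbar) ^ 2 := by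
  intro t
  have hcentered : ∑ i, (x0 i - xbar) = 0 := by
    rw [sum_sub_distrib, sum_const, card_univ, Fintype.card_fin, nsmul_eq_mul, hxbar]
    rw [mul_div_cancel₀ _ (Nat.cast_ne_zero.mpr (by omega)), sub_self]
  rw [sum_piFinset_ofFn_reverse_prod_mulVec (powersetCard k univ) (cliqueW n)
      (fun v => ∑ i, (v i - xbar) = 0) (fun v => ∑ i, (v i - xbar) ^ 2)
      (n.choose k * (((n : ℝ) - k) / ((n : ℝ) - 1))) ?_ ?_ t hcentered]
  · have hchoose : (n.choose k : ℝ) ^ t ≠ 0 :=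
      pow_ne_zero _ (Nat.cast_ne_zero.mpr (Nat.choose_pos (by omega)).ne')
    rw [mul_pow, mul_assoc, mul_div_cancel_left₀ _ hchoose]
  · intro S _ v hv
    simp_rw [← cliqueW_mulVec_sub_const]
    rwa [sum_cliqueW_mulVec]
  · intro v hv
    simp_rw [← cliqueW_mulVec_sub_const]
    exact sum_powersetCard_sum_sq_cliqueW_mulVec hk (by omega) hv

/-- Theorem 3 (rate statement): with `S₀, S₁, …` i.i.d. uniform over `k`-element subsets and
`x(t+1) = W_{S_t} x(t)`, one has `𝔼[‖x(t) − x̄𝟙‖²] = ν^t·‖x(0) − x̄𝟙‖²` for every `t`,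
where `ν = (n−k)/(n−1)`.  The expectation over the first `t` choices is written as a uniform
average over all `ω : Fin t → {k-subsets}`, and
`x(t) = W_{S_{t−1}} ⋯ W_{S_0} x(0)` is `(List.ofFn fun τ => W (ω τ)).reverse.prod *ᵥ x0`. -/
theorem randomized_clique_gossip_meanSquare_rate
    {n k : ℕ} (hn : 3 ≤ n) (hk : 2 ≤ k) (hkn : k ≤ n - 1)
    (x0 : Fin n → ℝ) (xbar : ℝ) (hxbar : xbar = (∑ j, x0 j) / n) :
    ∀ t : ℕ,
      (∑ ω ∈ Fintype.piFinset
            (fun _ : Fin t => Finset.powersetCard k (Finset.univ : Finset (Fin n))),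
          ∑ i, ((((List.ofFn fun τ : Fin t => cliqueW n (ω τ)).reverse.prod *ᵥ x0) i - xbar) ^ 2))
          / (n.choose k : ℝ) ^ t
        = (((n : ℝ) - (k : ℝ)) / ((n : ℝ) - 1)) ^ t * ∑ i, (x0 i - xbar) ^ 2 :=
  randomized_clique_gossip_meanSquare_rate_general hk hkn x0 xbar hxbar
end

section
/- Let n ≥ 3 and 2 ≤ k ≤ n−1. Let (S_t)_{t≥0} be i.i.d. random variables, each uniformly distributed over the k-element subsets of {1,…,n}, and for x(0) ∈ ℝⁿ define x(t+1) = W_{S_t} x(t), where W_S is the clique-averaging matrix of S. Then almost surely x(t) converges to x̄·𝟙, where x̄ = (1/n)Σ_{j=1}^n x_j(0). -/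
open Matrix Finset Filter MeasureTheory ProbabilityTheory
open scoped ENNReal

/-- Finsets of `Fin n` carry the discrete σ-algebra. -/
instance {n : ℕ} : MeasurableSpace (Finset (Fin n)) := ⊤

/-! The deviation `y(t) = x(t) - x̄·𝟙` has coordinate sum zero and obeys the same recursion. For a
zero-sum `y`, averaging `‖W_S y‖²` over all `k`-subsets `S` gives exactly `(n-k)/(n-1)·‖y‖²`, by
counting the `k`-subsets that contain one or two given indices. As `y(t)` is a function of
`S_0, …, S_{t-1}`, it is independent of `S_t`, so `E‖y(t)‖² = ((n-k)/(n-1))^t ‖y(0)‖²`. These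
expectations are summable, hence `∑ₜ ‖y(t)‖² < ∞` almost surely and `y(t) → 0`. -/

open scoped Topology

namespace CliqueGossip

section Counting

variable {α : Type*} [Fintype α] [DecidableEq α] {k : ℕ}

local notation "N" => Fintype.card α

theorem card_powersetCard_filter_mem (hk : 1 ≤ k) (i : α) :
    #{s ∈ powersetCard k (univ : Finset α) | i ∈ s} = (N - 1).choose (k - 1) := by
  simpa using card_filter_powersetCard_subset {i} univ k (subset_univ _) (by simpa using hk)

theorem card_powersetCard_filter_mem_and_mem (hk : 2 ≤ k) (i j : α) :
    #{s ∈ powersetCard k (univ : Finset α) | i ∈ s ∧ j ∈ s} =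
      if i = j then (N - 1).choose (k - 1) else (N - 2).choose (k - 2) := by
  split_ifs with hij
  · subst hij
    simpa using card_powersetCard_filter_mem (by omega : 1 ≤ k) i
  · have h := card_filter_powersetCard_subset {i, j} univ k (subset_univ _)
      (by rw [card_pair hij]; exact hk)
    simpa [insert_subset_iff, card_pair hij] using h

theorem sum_powersetCard_sum (hk : 1 ≤ k) (f : α → ℝ) :
    ∑ s ∈ powersetCard k univ, ∑ i ∈ s, f i = (N - 1).choose (k - 1) * ∑ i, f i := by
  rw [sum_comm' (t' := univ) (s' := fun i => {s ∈ powersetCard k univ | i ∈ s}) (by simp),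
    mul_sum]
  simp only [sum_const, card_powersetCard_filter_mem hk, nsmul_eq_mul]

theorem sum_powersetCard_sq_sum (hk : 2 ≤ k) (y : α → ℝ) :
    ∑ s ∈ powersetCard k univ, (∑ i ∈ s, y i) ^ 2 =
      (N - 2).choose (k - 2) * (∑ i, y i) ^ 2
        + ((N - 1).choose (k - 1) - (N - 2).choose (k - 2) : ℝ) * ∑ i, y i ^ 2 := by
  simp_rw [sq, sum_mul_sum, ← sum_product']
  rw [sum_comm' (t' := univ ×ˢ univ)
    (s' := fun p => {s ∈ powersetCard k univ | p.1 ∈ s ∧ p.2 ∈ s}) (by simp)]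
  simp only [sum_const, card_powersetCard_filter_mem_and_mem hk, nsmul_eq_mul, sum_product]
  set a := (N - 1).choose (k - 1)
  set b := (N - 2).choose (k - 2)
  have hsplit : ∀ i j : α, ((if i = j then a else b : ℕ) : ℝ) * (y i * y j) =
      b * (y i * y j) + if i = j then ((a : ℝ) - b) * (y i * y i) else 0 := by
    intro i j
    split_ifs with h
    · subst h; ring
    · simp
  simp only [hsplit, sum_add_distrib, sum_ite_eq, mem_univ, if_true, ← mul_sum]

end Counting

variable {n k : ℕ}

theorem cliqueW_mulVec_apply (s : Finset (Fin n)) (y : Fin n → ℝ) (i : Fin n) :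
    (cliqueW n s *ᵥ y) i = if i ∈ s then (∑ j ∈ s, y j) / #s else y i := by
  simp only [cliqueW, add_mulVec, smul_mulVec, sum_mulVec, vecMulVec_mulVec, Pi.add_apply,
    Pi.smul_apply, Finset.sum_apply, smul_eq_mul, dotProduct]
  split_ifs with hi
  · simp [hi, Finset.sum_ite_mem, Pi.single_apply, div_eq_inv_mul]
  · simp [hi, Pi.single_apply, Finset.sum_ite_mem]

theorem sum_comp_cliqueW_mulVec (s : Finset (Fin n)) (f : ℝ → ℝ) (y : Fin n → ℝ) :
    ∑ i, f ((cliqueW n s *ᵥ y) i) = #s * f ((∑ j ∈ s, y j) / #s) + ∑ i ∈ sᶜ, f (y i) := by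
  rw [← sum_add_sum_compl s, ← nsmul_eq_mul, ← sum_const]
  congr 1 <;> refine sum_congr rfl fun i hi => congrArg f ?_ <;> rw [cliqueW_mulVec_apply]
  · exact if_pos hi
  · exact if_neg (mem_compl.mp hi)

theorem sum_cliqueW_mulVec {s : Finset (Fin n)} (hs : s.Nonempty) (y : Fin n → ℝ) :
    ∑ i, (cliqueW n s *ᵥ y) i = ∑ i, y i := by
  have hs : (#s : ℝ) ≠ 0 := by exact_mod_cast hs.card_ne_zero
  have := sum_comp_cliqueW_mulVec s id y
  rw [id, mul_div_cancel₀ _ hs] at this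
  simpa only [id, sum_add_sum_compl s y] using this

theorem cliqueW_mulVec_const {s : Finset (Fin n)} (hs : s.Nonempty) (c : ℝ) :
    cliqueW n s *ᵥ (fun _ => c) = fun _ => c := by
  have hs : (#s : ℝ) ≠ 0 := by exact_mod_cast hs.card_ne_zero
  ext i
  rw [cliqueW_mulVec_apply, sum_const, nsmul_eq_mul, mul_div_cancel_left₀ _ hs, ite_self]

theorem sum_sq_cliqueW_mulVec (s : Finset (Fin n)) (y : Fin n → ℝ) :
    ∑ i, (cliqueW n s *ᵥ y) i ^ 2 = (∑ i ∈ s, y i) ^ 2 / #s + ∑ i ∈ sᶜ, y i ^ 2 := by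
  rw [sum_comp_cliqueW_mulVec s (· ^ 2)]
  rcases eq_or_ne (#s : ℝ) 0 with hs | hs
  · simp [hs]
  · field_simp

theorem sum_sq_cliqueW_mulVec_le (s : Finset (Fin n)) (y : Fin n → ℝ) :
    ∑ i, (cliqueW n s *ᵥ y) i ^ 2 ≤ ∑ i, y i ^ 2 := by
  rw [sum_sq_cliqueW_mulVec, ← sum_add_sum_compl s (fun i => y i ^ 2), add_le_add_iff_right]
  rcases eq_or_ne (#s : ℝ) 0 with hs | hs
  · simp only [hs, div_zero]
    positivity
  · rw [div_le_iff₀ (lt_of_le_of_ne (Nat.cast_nonneg _) hs.symm), mul_comm]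
    exact sq_sum_le_card_mul_sum_sq

theorem sum_eq_of_cliqueW_recursion {σ : ℕ → Finset (Fin n)} (hσ : ∀ t, (σ t).Nonempty)
    {y : ℕ → Fin n → ℝ} (hy : ∀ t, y (t + 1) = cliqueW n (σ t) *ᵥ y t) (t : ℕ) :
    ∑ i, y t i = ∑ i, y 0 i := by
  induction t with
  | zero => rfl
  | succ t ih => rw [hy, sum_cliqueW_mulVec (hσ t), ih]

theorem sum_sq_le_of_cliqueW_recursion {σ : ℕ → Finset (Fin n)} {y : ℕ → Fin n → ℝ}
    (hy : ∀ t, y (t + 1) = cliqueW n (σ t) *ᵥ y t) (t : ℕ) :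
    ∑ i, y t i ^ 2 ≤ ∑ i, y 0 i ^ 2 := by
  induction t with
  | zero => rfl
  | succ t ih => exact (hy t ▸ sum_sq_cliqueW_mulVec_le _ _).trans ih

theorem sum_powersetCard_sum_sq_cliqueW_mulVec (hk : 2 ≤ k) (hkn : k ≤ n) {y : Fin n → ℝ}
    (hy : ∑ i, y i = 0) :
    ∑ s ∈ powersetCard k univ, ∑ i, (cliqueW n s *ᵥ y) i ^ 2 =
      n.choose k * ((n - k) / (n - 1)) * ∑ i, y i ^ 2 := by
  have hsplit : ∀ s ∈ powersetCard k (univ : Finset (Fin n)), ∑ i, (cliqueW n s *ᵥ y) i ^ 2 =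
      (∑ i ∈ s, y i) ^ 2 / k + (∑ i, y i ^ 2 - ∑ i ∈ s, y i ^ 2) := fun s hs => by
    rw [sum_sq_cliqueW_mulVec, (mem_powersetCard.mp hs).2, ← sum_add_sum_compl s (fun i => y i ^ 2),
      add_sub_cancel_left]
  rw [sum_congr rfl hsplit, sum_add_distrib, ← sum_div, sum_powersetCard_sq_sum hk, sum_sub_distrib,
    sum_const, sum_powersetCard_sum (by omega), card_powersetCard, card_univ, Fintype.card_fin, hy,
    nsmul_eq_mul]
  obtain ⟨m, rfl⟩ : ∃ m, n = m + 2 := ⟨n - 2, by omega⟩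
  obtain ⟨j, rfl⟩ : ∃ j, k = j + 2 := ⟨k - 2, by omega⟩
  have h1 : ((m + 2 : ℕ) : ℝ) * (m + 1).choose (j + 1) = (m + 2).choose (j + 2) * (j + 2 : ℕ) := by
    exact_mod_cast Nat.add_one_mul_choose_eq (m + 1) (j + 1)
  have h2 : ((m + 1 : ℕ) : ℝ) * m.choose j = (m + 1).choose (j + 1) * (j + 1 : ℕ) := by
    exact_mod_cast Nat.add_one_mul_choose_eq m j
  simp only [Nat.add_sub_cancel, show m + 2 - 1 = m + 1 by omega, show j + 2 - 1 = j + 1 by omega]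
  push_cast at h1 h2 ⊢
  rw [show (m : ℝ) + 2 - (j + 2) = m - j by ring, show (m : ℝ) + 2 - 1 = m + 1 by ring]
  field_simp
  linear_combination (-(∑ i, y i ^ 2) * (j + 1)) * h1 + (-(∑ i, y i ^ 2)) * h2

section Probability

variable {Ω β : Type*} [mβ : MeasurableSpace β]

abbrev pastSigmaAlgebra (S : ℕ → Ω → β) (t : ℕ) : MeasurableSpace Ω :=
  ⨆ j ∈ Set.Iio t, mβ.comap (S j)

theorem measurable_pastSigmaAlgebra_of_recursion {γ : Type*} [MeasurableSpace γ]
    {S : ℕ → Ω → β} {F : β → γ → γ} (hF : Measurable (Function.uncurry F)) {X : ℕ → Ω → γ}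
    {x₀ : γ} (hX0 : ∀ ω, X 0 ω = x₀) (hX : ∀ t ω, X (t + 1) ω = F (S t ω) (X t ω)) (t : ℕ) :
    Measurable[pastSigmaAlgebra S t] (X t) := by
  induction t with
  | zero => simp [funext hX0]
  | succ t ih =>
    have hS : Measurable[pastSigmaAlgebra S (t + 1)] (S t) :=
      (comap_measurable (S t)).mono
        (le_biSup (fun j => mβ.comap (S j)) (Nat.lt_succ_self t : t ∈ Set.Iio (t + 1))) le_rfl
    have hmono : pastSigmaAlgebra S t ≤ pastSigmaAlgebra S (t + 1) :=
      iSup₂_mono' fun j hj => ⟨j, Nat.lt_succ_of_lt hj, le_rfl⟩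
    rw [show X (t + 1) = fun ω => F (S t ω) (X t ω) from funext (hX t)]
    exact hF.comp (hS.prodMk (ih.mono hmono le_rfl))

variable [MeasurableSpace Ω] {μ : Measure Ω}

theorem indep_comap_pastSigmaAlgebra {S : ℕ → Ω → β} (hS : ∀ t, Measurable (S t))
    (hind : iIndepFun S μ) (t : ℕ) :
    Indep (mβ.comap (S t)) (pastSigmaAlgebra S t) μ := by
  have h := indep_iSup_of_disjoint (fun j => (hS j).comap_le) hind.iIndep
    (S := {t}) (T := Set.Iio t) (by simp)
  rwa [_root_.iSup_singleton] at h

theorem indepFun_of_measurable_pastSigmaAlgebra {γ : Type*} [MeasurableSpace γ]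
    {S : ℕ → Ω → β} (hS : ∀ t, Measurable (S t)) (hind : iIndepFun S μ) {t : ℕ} {Z : Ω → γ}
    (hZ : Measurable[pastSigmaAlgebra S t] Z) : IndepFun (S t) Z μ :=
  (IndepFun_iff_Indep _ _ _).2
    (indep_of_indep_of_le_right (indep_comap_pastSigmaAlgebra hS hind t) hZ.comap_le)

theorem integral_comp_eq_sum_of_indepFun [MeasurableSingletonClass β] {γ : Type*}
    [MeasurableSpace γ] {A : Ω → β} {B : Ω → γ} (hA : Measurable A) (hAB : IndepFun A B μ)
    {P : Finset β} (hP : ∀ ω, A ω ∈ P) {h : β → γ → ℝ} (hh : ∀ b, Measurable (h b))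
    (hint : ∀ b, Integrable (fun ω => h b (B ω)) μ) :
    ∫ ω, h (A ω) (B ω) ∂μ = ∑ b ∈ P, μ.real {ω | A ω = b} * ∫ ω, h b (B ω) ∂μ := by
  have hsplit : (fun ω => h (A ω) (B ω)) =
      fun ω => ∑ b ∈ P, ({b} : Set β).indicator 1 (A ω) * h b (B ω) := by
    ext ω
    rw [sum_eq_single_of_mem (A ω) (hP ω) fun b _ hb => by simp [Ne.symm hb]]
    simp
  have hind : ∀ b, IndepFun (fun ω => ({b} : Set β).indicator (1 : β → ℝ) (A ω))
      (fun ω => h b (B ω)) μ := fun b =>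
    hAB.comp (measurable_one.indicator (measurableSet_singleton b)) (hh b)
  rw [hsplit, integral_finsetSum]
  · refine sum_congr rfl fun b _ => ?_
    rw [(hind b).integral_fun_mul_eq_mul_integral
      ((measurable_one.indicator (measurableSet_singleton b)).comp hA).aestronglyMeasurable
      (hint b).aestronglyMeasurable]
    exact congrArg (· * _) (integral_indicator_one (hA (measurableSet_singleton b)))
  · refine fun b _ => ((hint b).indicator (hA (measurableSet_singleton b))).congr
      (Eventually.of_forall fun ω => ?_)
    by_cases hb : A ω = b <;> simp [hb]

theorem tendsto_zero_of_tendsto_sum_sq {ι α : Type*} [Fintype ι] {l : Filter α} {u : α → ι → ℝ}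
    (h : Tendsto (fun a => ∑ i, u a i ^ 2) l (𝓝 0)) : Tendsto u l (𝓝 0) := by
  refine tendsto_pi_nhds.2 fun i => squeeze_zero_norm (fun a => ?_)
    (by simpa using h.sqrt)
  exact Real.abs_le_sqrt (single_le_sum (f := fun j => u a j ^ 2) (fun j _ => sq_nonneg _)
    (mem_univ i))

theorem ae_tendsto_zero_of_summable_integral {f : ℕ → Ω → ℝ} (hf : ∀ t ω, 0 ≤ f t ω)
    (hint : ∀ t, Integrable (f t) μ) (hsum : Summable fun t => ∫ ω, f t ω ∂μ) :
    ∀ᵐ ω ∂μ, Tendsto (fun t => f t ω) atTop (𝓝 0) := by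
  have hmeas : ∀ t, AEMeasurable (fun ω => ENNReal.ofReal (f t ω)) μ :=
    fun t => (hint t).aemeasurable.ennreal_ofReal
  have hfin : ∫⁻ ω, ∑' t, ENNReal.ofReal (f t ω) ∂μ ≠ ∞ := by
    rw [lintegral_tsum hmeas]
    simp_rw [← ofReal_integral_eq_lintegral_ofReal (hint _) (Eventually.of_forall (hf _))]
    rw [← ENNReal.ofReal_tsum_of_nonneg (fun t => integral_nonneg (hf t)) hsum]
    exact ENNReal.ofReal_ne_top
  filter_upwards [ae_lt_top' (AEMeasurable.tsum hmeas) hfin] with ω hω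
  have h := (ENNReal.summable_toReal hω.ne).tendsto_atTop_zero
  simpa only [ENNReal.toReal_ofReal (hf _ ω)] using h

end Probability

variable {Ω : Type*} [MeasurableSpace Ω] {μ : Measure Ω}

instance : DiscreteMeasurableSpace (Finset (Fin n)) := ⟨fun _ => trivial⟩

theorem measurable_uncurry_cliqueW_mulVec :
    Measurable (Function.uncurry fun (s : Finset (Fin n)) (y : Fin n → ℝ) => cliqueW n s *ᵥ y) :=
  measurable_from_prod_countable_right fun s => by
    change Measurable fun y => cliqueW n s *ᵥ y
    exact (continuous_const.matrix_mulVec continuous_id).measurable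

theorem integral_sum_sq_cliqueW_mulVec (hk : 2 ≤ k) (hkn : k ≤ n) {A : Ω → Finset (Fin n)}
    {Z : Ω → Fin n → ℝ} (hA : Measurable A) (hZ : Measurable Z) (hAZ : IndepFun A Z μ)
    (hAk : ∀ ω, #(A ω) = k)
    (hunif : ∀ s : Finset (Fin n), #s = k → μ {ω | A ω = s} = (n.choose k : ℝ≥0∞)⁻¹)
    (hZsum : ∀ ω, ∑ i, Z ω i = 0) (hint : Integrable (fun ω => ∑ i, Z ω i ^ 2) μ) :
    ∫ ω, ∑ i, (cliqueW n (A ω) *ᵥ Z ω) i ^ 2 ∂μ = (n - k) / (n - 1) * ∫ ω, ∑ i, Z ω i ^ 2 ∂μ := by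
  have hC : (n.choose k : ℝ) ≠ 0 := Nat.cast_ne_zero.2 (Nat.choose_pos hkn).ne'
  have hint' : ∀ s, Integrable (fun ω => ∑ i, (cliqueW n s *ᵥ Z ω) i ^ 2) μ := fun s =>
    hint.mono' (by fun_prop) (Eventually.of_forall fun ω => by
      rw [Real.norm_of_nonneg (by positivity)]
      exact sum_sq_cliqueW_mulVec_le s (Z ω))
  rw [integral_comp_eq_sum_of_indepFun hA hAZ (P := powersetCard k univ)
    (fun ω => mem_powersetCard.2 ⟨subset_univ _, hAk ω⟩)
    (h := fun s y => ∑ i, (cliqueW n s *ᵥ y) i ^ 2) (fun s => by fun_prop) hint']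
  rw [sum_congr rfl fun s hs => by rw [Measure.real, hunif s (mem_powersetCard.1 hs).2,
    ENNReal.toReal_inv, ENNReal.toReal_natCast], ← mul_sum,
    ← integral_finsetSum _ fun s _ => hint' s]
  simp_rw [sum_powersetCard_sum_sq_cliqueW_mulVec hk hkn (hZsum _)]
  rw [integral_const_mul]
  field_simp

theorem summable_geometric_sub_div_sub_one (hk : 2 ≤ k) (hkn : k ≤ n) :
    Summable fun t => (((n : ℝ) - k) / (n - 1)) ^ t := by
  have hk' : (2 : ℝ) ≤ k := by exact_mod_cast hk
  have hkn' : (k : ℝ) ≤ n := by exact_mod_cast hkn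
  exact summable_geometric_of_lt_one (div_nonneg (by linarith) (by linarith))
    ((div_lt_one (by linarith)).2 (by linarith))

theorem ae_tendsto_zero_of_cliqueW_recursion [IsProbabilityMeasure μ] (hk : 2 ≤ k) (hkn : k ≤ n)
    {S : ℕ → Ω → Finset (Fin n)} (hmeas : ∀ t, Measurable (S t)) (hindep : iIndepFun S μ)
    (hvals : ∀ t ω, #(S t ω) = k)
    (hunif : ∀ t, ∀ s : Finset (Fin n), #s = k → μ {ω | S t ω = s} = (n.choose k : ℝ≥0∞)⁻¹)
    {y₀ : Fin n → ℝ} (hy₀ : ∑ i, y₀ i = 0) {Y : ℕ → Ω → Fin n → ℝ} (hY0 : ∀ ω, Y 0 ω = y₀)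
    (hY : ∀ t ω, Y (t + 1) ω = cliqueW n (S t ω) *ᵥ Y t ω) :
    ∀ᵐ ω ∂μ, Tendsto (fun t => Y t ω) atTop (𝓝 0) := by
  have hsum : ∀ t ω, ∑ i, Y t ω i = 0 := fun t ω =>
    (sum_eq_of_cliqueW_recursion (y := (Y · ω)) (fun t => card_pos.1 (by rw [hvals]; omega))
      (hY · ω) t).trans (by rw [hY0, hy₀])
  have hpast : ∀ t, Measurable[pastSigmaAlgebra S t] (Y t) :=
    measurable_pastSigmaAlgebra_of_recursion (F := fun s y => cliqueW n s *ᵥ y)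
      measurable_uncurry_cliqueW_mulVec hY0 hY
  have hYmeas : ∀ t, Measurable (Y t) := fun t =>
    (hpast t).mono (iSup₂_le fun j _ => (hmeas j).comap_le) le_rfl
  have hbound : ∀ t ω, ∑ i, Y t ω i ^ 2 ≤ ∑ i, y₀ i ^ 2 := fun t ω =>
    hY0 ω ▸ sum_sq_le_of_cliqueW_recursion (y := (Y · ω)) (hY · ω) t
  have hint : ∀ t, Integrable (fun ω => ∑ i, Y t ω i ^ 2) μ := fun t =>
    .of_bound (by fun_prop) _ (Eventually.of_forall fun ω => by
      rw [Real.norm_of_nonneg (by positivity)]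
      exact hbound t ω)
  have hgeom : ∀ t, ∫ ω, ∑ i, Y t ω i ^ 2 ∂μ = ((n - k) / (n - 1)) ^ t * ∑ i, y₀ i ^ 2 := by
    intro t
    induction t with
    | zero => simp [hY0]
    | succ t ih =>
      simp_rw [hY t]
      rw [integral_sum_sq_cliqueW_mulVec hk hkn (hmeas t) (hYmeas t)
        (indepFun_of_measurable_pastSigmaAlgebra hmeas hindep (hpast t)) (hvals t) (hunif t)
        (hsum t) (hint t), ih, pow_succ]
      ring
  have hsummable : Summable fun t => ∫ ω, ∑ i, Y t ω i ^ 2 ∂μ := by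
    simp_rw [hgeom]
    exact (summable_geometric_sub_div_sub_one hk hkn).mul_right _
  filter_upwards [ae_tendsto_zero_of_summable_integral (fun t ω => by positivity) hint hsummable]
    with ω hω
  exact tendsto_zero_of_tendsto_sum_sq hω

end CliqueGossip

theorem randomized_clique_gossip_as_convergence_general
    {n k : ℕ} (hk : 2 ≤ k) (hkn : k ≤ n - 1)
    {Ω : Type*} [MeasurableSpace Ω] (μ : Measure Ω) [IsProbabilityMeasure μ]
    (S : ℕ → Ω → Finset (Fin n)) (hmeas : ∀ t, Measurable (S t))
    (hindep : iIndepFun S μ)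
    (hvals : ∀ t ω, (S t ω).card = k)
    (hunif : ∀ t, ∀ s : Finset (Fin n), s.card = k →
      μ {ω | S t ω = s} = ((n.choose k : ℝ≥0∞))⁻¹)
    (x0 : Fin n → ℝ)
    (X : ℕ → Ω → Fin n → ℝ) (hX0 : ∀ ω, X 0 ω = x0)
    (hXrec : ∀ t ω, X (t + 1) ω = cliqueW n (S t ω) *ᵥ X t ω) :
    ∀ᵐ ω ∂μ, Tendsto (fun t => X t ω) atTop (nhds fun _ => (∑ j, x0 j) / n) := by
  set c := (∑ j, x0 j) / n
  have hn : (n : ℝ) ≠ 0 := Nat.cast_ne_zero.2 (by omega)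
  have hdev := CliqueGossip.ae_tendsto_zero_of_cliqueW_recursion hk (by omega) hmeas hindep hvals
    hunif (y₀ := x0 - fun _ => c) (Y := fun t ω => X t ω - fun _ => c)
    (by simp [sum_sub_distrib, c, mul_div_cancel₀ _ hn]) (fun ω => by rw [hX0])
    (fun t ω => by
      rw [hXrec, mulVec_sub, CliqueGossip.cliqueW_mulVec_const (card_pos.1 (by rw [hvals]; omega))])
  filter_upwards [hdev] with ω hω
  simpa using hω.add_const fun _ => c

/-- Theorem 3 (almost-sure convergence): with `(S_t)` i.i.d. uniform over the `k`-element
subsets of `{1,…,n}` and `x(t+1) = W_{S_t} x(t)`, almost surely `x(t) → x̄·𝟙` where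
`x̄ = (1/n)Σ_j x_j(0)`. -/
theorem randomized_clique_gossip_as_convergence
    {n k : ℕ} (hn : 3 ≤ n) (hk : 2 ≤ k) (hkn : k ≤ n - 1)
    {Ω : Type*} [MeasurableSpace Ω] (μ : Measure Ω) [IsProbabilityMeasure μ]
    (S : ℕ → Ω → Finset (Fin n)) (hmeas : ∀ t, Measurable (S t))
    (hindep : iIndepFun S μ)
    (hvals : ∀ t ω, (S t ω).card = k)
    (hunif : ∀ t, ∀ s : Finset (Fin n), s.card = k →
      μ {ω | S t ω = s} = ((n.choose k : ℝ≥0∞))⁻¹)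
    (x0 : Fin n → ℝ)
    (X : ℕ → Ω → Fin n → ℝ) (hX0 : ∀ ω, X 0 ω = x0)
    (hXrec : ∀ t ω, X (t + 1) ω = cliqueW n (S t ω) *ᵥ X t ω) :
    ∀ᵐ ω ∂μ, Tendsto (fun t => X t ω) atTop (nhds fun _ => (∑ j, x0 j) / n) :=
  randomized_clique_gossip_as_convergence_general hk hkn μ S hmeas hindep hvals hunif x0 X hX0 hXrec
end
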